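/- Let π be a log-concave probability measure on ℝ^{d_Θ} and 𝕌 a log-concave probability measure on ℝ^{d_𝒰}, and let μ := π ⊗ 𝕌 on ℝ^D with D = d_Θ + d_𝒰; write z = (θ, u) and let P : ℝ^D → ℝ^{d_Θ} be the coordinate projection z ↦ θ. Let r : ℝ^{d_X} × ℝ^{d_Θ} → ℝ be C¹ and satisfy the growth condition ‖∇r(x, θ)‖₂ ≤ K_grow(‖(x, θ)‖₂ + 1) for all (x, θ), for some K_grow > 0. Then there exists a constant K₀ > 0, depending only on D, d_Θ, d_X, K_grow and μ (in particular not on the generator), such that for every C¹ map G⁰ : ℝ^D → ℝ^{d_X} with ‖G⁰‖_{W^{1,4}(μ)} < ∞, the variance of z ↦ r(G⁰(z), Pz) under μ satisfies Var_{z∼μ}[r(G⁰(z), Pz)] ≤ K₀ (‖G⁰‖⁴_{W^{1,4}(μ)} + 1). -/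

import Mathlib

open MeasureTheory ProbabilityTheory
open scoped ENNReal

noncomputable section

/-- `ℝ^d` with the euclidean norm. -/
abbrev Euc (d : ℕ) := EuclideanSpace ℝ (Fin d)

/-- A measure on `ℝ^d` is log-concave if it has density `exp (-ψ)` with respect to
Lebesgue measure for some convex function `ψ : ℝ^d → ℝ`. -/
def IsLogConcaveMeasure {d : ℕ} (μ : Measure (Euc d)) : Prop :=
  ∃ ψ : Euc d → ℝ, ConvexOn ℝ Set.univ ψ ∧
    μ = volume.withDensity fun x => ENNReal.ofReal (Real.exp (-ψ x))

/-- Concatenation `ℝ^a × ℝ^b → ℝ^(a+b)`. -/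
def concatE {a b : ℕ} (x : Euc a) (y : Euc b) : Euc (a + b) :=
  (EuclideanSpace.equiv (Fin (a + b)) ℝ).symm
    (Fin.append (EuclideanSpace.equiv (Fin a) ℝ x) (EuclideanSpace.equiv (Fin b) ℝ y))

/-- Coordinate projection `ℝ^(a+b) → ℝ^a` onto the first `a` coordinates. -/
def projFst (a b : ℕ) (z : Euc (a + b)) : Euc a :=
  (EuclideanSpace.equiv (Fin a) ℝ).symm
    fun i => EuclideanSpace.equiv (Fin (a + b)) ℝ z (Fin.castAdd b i)

/-- Fourth power of the weighted Sobolev norm `‖G‖_{W^{1,4}(μ)}`, namely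
`∫ ‖G‖₂⁴ dμ + ∑ i ∫ ‖∂_i G‖₂⁴ dμ`, as an extended nonnegative real. -/
def W14pow4 {D k : ℕ} (μ : Measure (Euc D)) (G : Euc D → Euc k) : ℝ≥0∞ :=
  (∫⁻ z, (‖G z‖₊ : ℝ≥0∞) ^ 4 ∂μ) +
    ∑ i : Fin D, ∫⁻ z, (‖fderiv ℝ G z (EuclideanSpace.single i 1)‖₊ : ℝ≥0∞) ^ 4 ∂μ

/-!
The mean value theorem and `‖∇r v‖ ≤ K (‖v‖ + 1)` give `(r v - r 0)² ≤ 3 K² (‖v‖⁴ + 1)`, and a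
variance is at most the second moment about any constant, here `r 0`. For `v = (G⁰ z, P z)`,
`‖v‖⁴ ≤ 2 (‖G⁰ z‖⁴ + ‖P z‖⁴)`: the first term is bounded by the Sobolev norm, the second is the
fourth moment of `π`. That moment is finite because `π` is log-concave: a convex `ψ` with
`∫ e^{-ψ} < ∞` has a sublevel set that is convex, of finite volume and contains a ball, hence is
bounded, so `ψ` grows at least linearly and `e^{-ψ}` decays exponentially.
-/

section ConvexSet

open Metric Set

variable {E : Type*} [NormedAddCommGroup E] [NormedSpace ℝ E]

lemma Convex.ball_midpoint_subset {s : Set E} (hs : Convex ℝ s) {x y : E} {ρ : ℝ}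
    (hball : ball x ρ ⊆ s) (hy : y ∈ s) : ball (midpoint ℝ x y) (ρ / 2) ⊆ s := by
  intro z hz
  have hw : (2 : ℝ) • z - y ∈ ball x ρ := by
    rw [mem_ball, dist_eq_norm] at hz ⊢
    have : (2 : ℝ) • z - y - x = (2 : ℝ) • (z - midpoint ℝ x y) := by
      rw [midpoint_eq_smul_add, invOf_eq_inv]; module
    rw [this, norm_smul]; norm_num; linarith
  have : z = midpoint ℝ ((2 : ℝ) • z - y) y := by
    rw [midpoint_eq_smul_add, invOf_eq_inv]; module
  rw [this]
  exact hs.midpoint_mem (hball hw) hy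

lemma Convex.exists_dist_eq_of_not_isBounded {s : Set E} (hs : Convex ℝ s) {x : E} (hx : x ∈ s)
    (hunb : ¬ Bornology.IsBounded s) {R : ℝ} (hR : 0 ≤ R) : ∃ y ∈ s, dist y x = R := by
  obtain ⟨y, hy, hRy⟩ : ∃ y ∈ s, R < dist y x := by
    by_contra! h
    exact hunb (isBounded_closedBall.subset fun y hy => mem_closedBall.2 (h y hy))
  have hpos : 0 < dist x y := by rw [dist_comm]; linarith
  refine ⟨AffineMap.lineMap x y (R / dist x y), hs.lineMap_mem hx hy ⟨by positivity, ?_⟩, ?_⟩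
  · rw [div_le_one hpos, dist_comm]; exact hRy.le
  · rw [dist_lineMap_left, Real.norm_of_nonneg (by positivity), div_mul_cancel₀ _ hpos.ne']

variable [MeasurableSpace E] [BorelSpace E]

lemma Convex.isBounded_of_measure_ne_top (μ : Measure E) [μ.IsAddHaarMeasure] {s : Set E}
    (hs : Convex ℝ s) {x : E} {ρ : ℝ} (hρ : 0 < ρ) (hball : ball x ρ ⊆ s) (hμ : μ s ≠ ⊤) :
    Bornology.IsBounded s := by
  by_contra hunb
  -- `s` contains the pairwise disjoint balls of radius `ρ / 2` around the midpoints of `x` and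
  -- points `y n ∈ s` with `dist (y n) x = 2ρn`.
  choose y hys hyx using fun n : ℕ =>
    hs.exists_dist_eq_of_not_isBounded (hball (mem_ball_self hρ)) hunb
      (by positivity : 0 ≤ 2 * ρ * n)
  set c : ℕ → E := fun n => midpoint ℝ x (y n)
  have hcx : ∀ n, dist (c n) x = ρ * n := fun n => by
    rw [dist_midpoint_left, dist_comm, hyx]; norm_num; ring
  have hdisj : Pairwise (Function.onFun Disjoint fun n => ball (c n) (ρ / 2)) := by
    intro n m hnm
    refine ball_disjoint_ball ?_
    have hnm' : (1 : ℝ) ≤ |(n : ℝ) - m| := by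
      have : (n : ℤ) - m ≠ 0 := by omega
      exact_mod_cast Int.one_le_abs this
    calc ρ / 2 + ρ / 2 = ρ * 1 := by ring
      _ ≤ ρ * |(n : ℝ) - m| := by gcongr
      _ = |dist (c n) x - dist (c m) x| := by
          rw [hcx, hcx, ← mul_sub, abs_mul, abs_of_pos hρ]
      _ ≤ dist (c n) (c m) := abs_dist_sub_le _ _ _
  apply hμ
  refine top_le_iff.1 ?_
  calc ⊤ = ∑' _ : ℕ, μ (ball x (ρ / 2)) :=
        (ENNReal.tsum_const_eq_top_of_ne_zero (measure_ball_pos μ x (by positivity)).ne').symm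
    _ = μ (⋃ n, ball (c n) (ρ / 2)) := by
        rw [measure_iUnion hdisj fun _ => measurableSet_ball]
        simp_rw [Measure.addHaar_ball_center μ]
    _ ≤ μ s := measure_mono (iUnion_subset fun n => hs.ball_midpoint_subset hball (hys n))

end ConvexSet

section ConvexFunction

open Metric Set Real
open scoped Nat

variable {E : Type*} [NormedAddCommGroup E] [NormedSpace ℝ E]

lemma ConvexOn.add_norm_div_le {ψ : E → ℝ} (hψ : ConvexOn ℝ univ ψ) {R : ℝ} (hR : 0 < R)
    (hsphere : ∀ y : E, ‖y‖ = R → ψ 0 + 1 < ψ y) {x : E} (hx : R ≤ ‖x‖) :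
    ψ 0 + ‖x‖ / R ≤ ψ x := by
  have hx0 : 0 < ‖x‖ := hR.trans_le hx
  set t := R / ‖x‖
  have ht0 : 0 < t := by positivity
  have ht1 : t ≤ 1 := (div_le_one hx0).2 hx
  have hconv := hψ.2 (mem_univ x) (mem_univ 0) ht0.le (sub_nonneg.2 ht1) (add_sub_cancel t 1)
  rw [smul_zero, add_zero, smul_eq_mul, smul_eq_mul] at hconv
  have hnorm : ‖t • x‖ = R := by
    rw [norm_smul, Real.norm_of_nonneg ht0.le, div_mul_cancel₀ _ hx0.ne']
  have h1 : 1 < t * (ψ x - ψ 0) := by linarith [hsphere _ hnorm]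
  rw [div_mul_eq_mul_div, lt_div_iff₀ hx0] at h1
  have : ‖x‖ / R ≤ ψ x - ψ 0 := by rw [div_le_iff₀ hR]; linarith
  linarith

lemma ConvexOn.exists_pos_mul_norm_sub_le [ProperSpace E] {ψ : E → ℝ} (hψ : ConvexOn ℝ univ ψ)
    (hcont : Continuous ψ) (hS : Bornology.IsBounded {x | ψ x ≤ ψ 0 + 1}) :
    ∃ a > 0, ∃ b, ∀ x, a * ‖x‖ - b ≤ ψ x := by
  obtain ⟨R, hR, hSR⟩ := hS.subset_closedBall_lt 0 0
  have hsphere : ∀ y : E, ‖y‖ = R + 1 → ψ 0 + 1 < ψ y := fun y hy => by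
    by_contra! h
    have := mem_closedBall_zero_iff.1 (hSR h)
    linarith
  obtain ⟨m, hm⟩ := (isCompact_closedBall (0 : E) (R + 1)).bddBelow_image hcont.continuousOn
  refine ⟨1 / (R + 1), by positivity, max (1 - m) (-ψ 0), fun x => ?_⟩
  rcases le_total ‖x‖ (R + 1) with hx | hx
  · have hmx : m ≤ ψ x := hm (mem_image_of_mem ψ (mem_closedBall_zero_iff.2 hx))
    have : 1 / (R + 1) * ‖x‖ ≤ 1 := by rw [one_div_mul_eq_div, div_le_one (by linarith)]; exact hx
    linarith [le_max_left (1 - m) (-ψ 0)]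
  · have := hψ.add_norm_div_le (by linarith) hsphere hx
    rw [one_div_mul_eq_div]
    linarith [le_max_right (1 - m) (-ψ 0)]

variable [MeasurableSpace E] [BorelSpace E] [FiniteDimensional ℝ E]

lemma ConvexOn.exists_pos_mul_norm_sub_le_of_lintegral_ne_top (μ : Measure E)
    [μ.IsAddHaarMeasure] {ψ : E → ℝ} (hψ : ConvexOn ℝ univ ψ)
    (hint : ∫⁻ x, ENNReal.ofReal (exp (-ψ x)) ∂μ ≠ ⊤) :
    ∃ a > 0, ∃ b, ∀ x, a * ‖x‖ - b ≤ ψ x := by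
  have hcont : Continuous ψ := continuousOn_univ.1 (hψ.continuousOn isOpen_univ)
  obtain ⟨ρ, hρ, hball⟩ := Metric.isOpen_iff.1 (isOpen_lt hcont continuous_const) 0
    (show ψ 0 < ψ 0 + 1 by linarith)
  set ε := ENNReal.ofReal (exp (-(ψ 0 + 1)))
  have hsub : {x | ψ x ≤ ψ 0 + 1} ⊆ {x | ε ≤ ENNReal.ofReal (exp (-ψ x))} :=
    fun x hx => ENNReal.ofReal_le_ofReal (exp_le_exp.2 (neg_le_neg hx))
  have hε : ε ≠ 0 := by simp [ε, exp_pos]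
  have hμS : μ {x | ψ x ≤ ψ 0 + 1} ≠ ⊤ :=
    ne_top_of_le_ne_top (ENNReal.div_ne_top hint hε) ((measure_mono hsub).trans
      (meas_ge_le_lintegral_div (by fun_prop) hε ENNReal.ofReal_ne_top))
  have hconvS : Convex ℝ {x | ψ x ≤ ψ 0 + 1} := by simpa using hψ.convex_le (ψ 0 + 1)
  exact hψ.exists_pos_mul_norm_sub_le hcont (hconvS.isBounded_of_measure_ne_top μ hρ
    (hball.trans (ofPred_subset_ofPred.2 fun _ => le_of_lt)) hμS)

lemma one_add_pow_mul_exp_neg_le {a s : ℝ} (ha : 0 < a) (hs : 0 ≤ s) (k : ℕ) :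
    (1 + s) ^ k * exp (-(a * s)) ≤ k ! * exp a / a ^ k := by
  have h := pow_div_factorial_le_exp (x := a * (1 + s)) (by positivity) k
  rw [div_le_iff₀ (by positivity), mul_pow, mul_add, mul_one, exp_add] at h
  rw [le_div_iff₀ (by positivity), exp_neg]
  calc (1 + s) ^ k * (exp (a * s))⁻¹ * a ^ k = a ^ k * (1 + s) ^ k * (exp (a * s))⁻¹ := by ring
    _ ≤ exp a * exp (a * s) * k ! * (exp (a * s))⁻¹ := by gcongr
    _ = k ! * exp a := by field_simp

lemma integrable_norm_pow_mul_exp_neg (μ : Measure E) [μ.IsAddHaarMeasure] {ψ : E → ℝ}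
    (hψ : Continuous ψ) {a b : ℝ} (ha : 0 < a) (hlin : ∀ x, a * ‖x‖ - b ≤ ψ x) (n : ℕ) :
    Integrable (fun x => ‖x‖ ^ n * exp (-ψ x)) μ := by
  set d := Module.finrank ℝ E
  set k := n + (d + 1)
  have hdom := (integrable_one_add_norm (μ := μ) (r := (d + 1 : ℕ))
    (by push_cast; linarith)).const_mul (k ! * exp a / a ^ k * exp b)
  refine hdom.mono' (by fun_prop) (.of_forall fun x => ?_)
  have hs := norm_nonneg x
  rw [norm_of_nonneg (by positivity), rpow_neg (by positivity), rpow_natCast]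
  have hψx : exp (-ψ x) ≤ exp b * exp (-(a * ‖x‖)) := by
    rw [← exp_add]; exact exp_le_exp.2 (by linarith [hlin x])
  calc ‖x‖ ^ n * exp (-ψ x) ≤ (1 + ‖x‖) ^ n * (exp b * exp (-(a * ‖x‖))) := by
        gcongr; linarith
    _ = (1 + ‖x‖) ^ k * exp (-(a * ‖x‖)) * exp b * ((1 + ‖x‖) ^ (d + 1))⁻¹ := by
        rw [pow_add (1 + ‖x‖) n]; field_simp
    _ ≤ k ! * exp a / a ^ k * exp b * ((1 + ‖x‖) ^ (d + 1))⁻¹ := by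
        gcongr; exact one_add_pow_mul_exp_neg_le ha hs k

lemma IsLogConcaveMeasure.integrable_norm_pow {d : ℕ} {μ : Measure (Euc d)} [IsFiniteMeasure μ]
    (h : IsLogConcaveMeasure μ) (n : ℕ) : Integrable (fun x => ‖x‖ ^ n) μ := by
  obtain ⟨ψ, hψ, rfl⟩ := h
  have hcont : Continuous ψ := continuousOn_univ.1 (hψ.continuousOn isOpen_univ)
  have hint : ∫⁻ x, ENNReal.ofReal (exp (-ψ x)) ≠ ⊤ := by
    simpa [withDensity_apply] using
      measure_ne_top (volume.withDensity fun x => ENNReal.ofReal (exp (-ψ x))) univ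
  obtain ⟨a, ha, b, hlin⟩ := hψ.exists_pos_mul_norm_sub_le_of_lintegral_ne_top volume hint
  rw [integrable_withDensity_iff_integrable_smul' (by fun_prop)
    (.of_forall fun _ => ENNReal.ofReal_lt_top)]
  simpa [ENNReal.toReal_ofReal (exp_pos _).le, mul_comm] using
    integrable_norm_pow_mul_exp_neg volume hcont ha hlin n

end ConvexFunction

section LinearGrowth

open Metric

variable {E : Type*} [NormedAddCommGroup E] [NormedSpace ℝ E] {r : E → ℝ} {K : ℝ}

lemma abs_sub_le_of_norm_fderiv_le (hr : Differentiable ℝ r)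
    (hgrow : ∀ v, ‖fderiv ℝ r v‖ ≤ K * (‖v‖ + 1)) (v : E) :
    |r v - r 0| ≤ K * (‖v‖ + 1) * ‖v‖ := by
  have hbound : ∀ w ∈ closedBall (0 : E) ‖v‖, ‖fderiv ℝ r w‖ ≤ K * (‖v‖ + 1) := fun w hw => by
    have hK : 0 ≤ K := by nlinarith [hgrow w, norm_nonneg (fderiv ℝ r w), norm_nonneg w]
    have hwv : ‖w‖ ≤ ‖v‖ := mem_closedBall_zero_iff.mp hw
    exact (hgrow w).trans (by gcongr)
  simpa using (convex_closedBall (0 : E) ‖v‖).norm_image_sub_le_of_norm_fderiv_le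
    (fun w _ => hr w) hbound (mem_closedBall_self (norm_nonneg v))
    (mem_closedBall_zero_iff.mpr le_rfl)

lemma sq_sub_le_of_norm_fderiv_le (hr : Differentiable ℝ r)
    (hgrow : ∀ v, ‖fderiv ℝ r v‖ ≤ K * (‖v‖ + 1)) (v : E) :
    (r v - r 0) ^ 2 ≤ 3 * K ^ 2 * (‖v‖ ^ 4 + 1) := by
  have h := abs_sub_le_of_norm_fderiv_le hr hgrow v
  calc (r v - r 0) ^ 2 = |r v - r 0| ^ 2 := (sq_abs _).symm
    _ ≤ (K * (‖v‖ + 1) * ‖v‖) ^ 2 := pow_le_pow_left₀ (abs_nonneg _) h 2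
    _ = K ^ 2 * (‖v‖ ^ 2 + ‖v‖) ^ 2 := by ring
    _ ≤ 3 * K ^ 2 * (‖v‖ ^ 4 + 1) := by
        nlinarith [mul_nonneg (sq_nonneg K) (sq_nonneg (‖v‖ * (‖v‖ - 1))),
          mul_nonneg (sq_nonneg K) (sq_nonneg (‖v‖ ^ 2 - 1)), sq_nonneg K]

lemma variance_comp_le_of_norm_fderiv_le {Ω : Type*} [MeasurableSpace Ω] {μ : Measure Ω}
    [IsProbabilityMeasure μ] (hr : Differentiable ℝ r)
    (hgrow : ∀ v, ‖fderiv ℝ r v‖ ≤ K * (‖v‖ + 1)) {V : Ω → E}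
    (hV : AEStronglyMeasurable V μ) (hV4 : Integrable (fun ω => ‖V ω‖ ^ 4) μ) :
    variance (fun ω => r (V ω)) μ ≤ 3 * K ^ 2 * (∫ ω, ‖V ω‖ ^ 4 ∂μ + 1) := by
  have hX : AEStronglyMeasurable (fun ω => r (V ω)) μ :=
    hr.continuous.comp_aestronglyMeasurable hV
  calc variance (fun ω => r (V ω)) μ
      = variance (fun ω => r (V ω) - r 0) μ := (variance_sub_const hX _).symm
    _ ≤ ∫ ω, (r (V ω) - r 0) ^ 2 ∂μ :=
        variance_le_expectation_sq (hX.sub aestronglyMeasurable_const)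
    _ ≤ ∫ ω, 3 * K ^ 2 * (‖V ω‖ ^ 4 + 1) ∂μ :=
        integral_mono_of_nonneg (.of_forall fun _ => sq_nonneg _)
          ((hV4.add (integrable_const 1)).const_mul _)
          (.of_forall fun ω => sq_sub_le_of_norm_fderiv_le hr hgrow (V ω))
    _ = 3 * K ^ 2 * (∫ ω, ‖V ω‖ ^ 4 ∂μ + 1) := by
        rw [integral_const_mul, integral_add hV4 (integrable_const 1)]
        simp

end LinearGrowth

lemma projFst_concatE {a b : ℕ} (x : Euc a) (y : Euc b) : projFst a b (concatE x y) = x := by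
  ext i; simp [projFst, concatE]

@[fun_prop]
lemma Continuous.concatE {X : Type*} [TopologicalSpace X] {a b : ℕ} {f : X → Euc a}
    {g : X → Euc b} (hf : Continuous f) (hg : Continuous g) :
    Continuous fun x => concatE (f x) (g x) := by
  unfold _root_.concatE; fun_prop

@[fun_prop]
lemma continuous_projFst {a b : ℕ} : Continuous (projFst a b) := by
  unfold projFst; fun_prop

lemma norm_concatE_sq {a b : ℕ} (x : Euc a) (y : Euc b) :
    ‖concatE x y‖ ^ 2 = ‖x‖ ^ 2 + ‖y‖ ^ 2 := by
  simp only [EuclideanSpace.norm_sq_eq, Fin.sum_univ_add]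
  simp [concatE]

lemma norm_concatE_pow_four_le {a b : ℕ} (x : Euc a) (y : Euc b) :
    ‖concatE x y‖ ^ 4 ≤ 2 * (‖x‖ ^ 4 + ‖y‖ ^ 4) := by
  have h := norm_concatE_sq x y
  nlinarith [sq_nonneg (‖x‖ ^ 2 - ‖y‖ ^ 2)]

lemma MeasureTheory.Integrable.norm_concatE_pow_four {Ω : Type*} [MeasurableSpace Ω]
    {μ : Measure Ω} {a b : ℕ} {f : Ω → Euc a} {g : Ω → Euc b} (hf : AEStronglyMeasurable f μ)
    (hg : AEStronglyMeasurable g μ) (hf4 : Integrable (fun ω => ‖f ω‖ ^ 4) μ)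
    (hg4 : Integrable (fun ω => ‖g ω‖ ^ 4) μ) :
    Integrable (fun ω => ‖concatE (f ω) (g ω)‖ ^ 4) μ := by
  have hfg : AEStronglyMeasurable (fun ω => concatE (f ω) (g ω)) μ :=
    (continuous_fst.concatE continuous_snd).comp_aestronglyMeasurable (hf.prodMk hg)
  refine ((hf4.add hg4).const_mul 2).mono' (by fun_prop) (.of_forall fun ω => ?_)
  rw [Real.norm_of_nonneg (by positivity)]
  exact norm_concatE_pow_four_le _ _

lemma integral_norm_concatE_pow_four_le {Ω : Type*} [MeasurableSpace Ω] {μ : Measure Ω}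
    {a b : ℕ} {f : Ω → Euc a} {g : Ω → Euc b}
    (hfg : Integrable (fun ω => ‖concatE (f ω) (g ω)‖ ^ 4) μ)
    (hf4 : Integrable (fun ω => ‖f ω‖ ^ 4) μ) (hg4 : Integrable (fun ω => ‖g ω‖ ^ 4) μ) :
    ∫ ω, ‖concatE (f ω) (g ω)‖ ^ 4 ∂μ ≤ 2 * (∫ ω, ‖f ω‖ ^ 4 ∂μ + ∫ ω, ‖g ω‖ ^ 4 ∂μ) := by
  rw [← integral_add hf4 hg4, ← integral_const_mul]
  exact integral_mono hfg ((hf4.add hg4).const_mul 2) fun ω => norm_concatE_pow_four_le _ _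

lemma map_projFst_map_concatE {a b : ℕ} (π : Measure (Euc a)) (ν : Measure (Euc b))
    [IsProbabilityMeasure ν] :
    ((π.prod ν).map fun p => concatE p.1 p.2).map (projFst a b) = π := by
  rw [Measure.map_map (by fun_prop) (by fun_prop)]
  simp [Function.comp_def, projFst_concatE]

lemma lintegral_nnnorm_pow_four_le_W14pow4 {D k : ℕ} (μ : Measure (Euc D)) (G : Euc D → Euc k) :
    ∫⁻ z, (‖G z‖₊ : ℝ≥0∞) ^ 4 ∂μ ≤ W14pow4 μ G :=
  le_self_add

lemma integrable_norm_pow_four_of_W14pow4_ne_top {D k : ℕ} {μ : Measure (Euc D)}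
    {G : Euc D → Euc k} (hG : Continuous G) (hW : W14pow4 μ G ≠ ⊤) :
    Integrable (fun z => ‖G z‖ ^ 4) μ := by
  refine ⟨by fun_prop, ?_⟩
  simpa [HasFiniteIntegral, enorm_pow, enorm_eq_nnnorm, lt_top_iff_ne_top] using
    ne_top_of_le_ne_top hW (lintegral_nnnorm_pow_four_le_W14pow4 μ G)

lemma integral_norm_pow_four_le_W14pow4 {D k : ℕ} {μ : Measure (Euc D)}
    {G : Euc D → Euc k} (hG : Continuous G) (hW : W14pow4 μ G ≠ ⊤) :
    ∫ z, ‖G z‖ ^ 4 ∂μ ≤ (W14pow4 μ G).toReal := by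
  rw [integral_eq_lintegral_of_nonneg_ae (.of_forall fun _ => by positivity) (by fun_prop)]
  refine ENNReal.toReal_mono hW ((le_of_eq ?_).trans (lintegral_nnnorm_pow_four_le_W14pow4 μ G))
  simp [ENNReal.ofReal_pow, ofReal_norm, enorm_eq_nnnorm]

theorem level0_variance_bound_general
    (dΘ dU dX : ℕ)
    (π : Measure (Euc dΘ)) (𝕌 : Measure (Euc dU))
    [IsProbabilityMeasure π] [IsProbabilityMeasure 𝕌]
    (hπ : IsLogConcaveMeasure π)
    (Kgrow : ℝ) (hKgrow : 0 < Kgrow) :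
    ∃ K₀ > (0 : ℝ),
      ∀ r : Euc (dX + dΘ) → ℝ, ContDiff ℝ 1 r →
        (∀ v : Euc (dX + dΘ), ‖fderiv ℝ r v‖ ≤ Kgrow * (‖v‖ + 1)) →
      ∀ G0 : Euc (dΘ + dU) → Euc dX, ContDiff ℝ 1 G0 →
        W14pow4 (Measure.map (fun p : Euc dΘ × Euc dU => concatE p.1 p.2) (π.prod 𝕌)) G0 ≠ ⊤ →
        variance
            (fun z : Euc (dΘ + dU) => r (concatE (G0 z) (projFst dΘ dU z)))
            (Measure.map (fun p : Euc dΘ × Euc dU => concatE p.1 p.2) (π.prod 𝕌))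
          ≤ K₀ *
            ((W14pow4 (Measure.map (fun p : Euc dΘ × Euc dU => concatE p.1 p.2) (π.prod 𝕌))
                G0).toReal + 1) := by
  set μ := Measure.map (fun p : Euc dΘ × Euc dU => concatE p.1 p.2) (π.prod 𝕌)
  have : IsProbabilityMeasure μ := Measure.isProbabilityMeasure_map (by fun_prop)
  have hmap : μ.map (projFst dΘ dU) = π := map_projFst_map_concatE π 𝕌
  have hP : Integrable (fun z => ‖projFst dΘ dU z‖ ^ 4) μ :=
    (integrable_map_measure (by fun_prop) (by fun_prop)).1 (hmap ▸ hπ.integrable_norm_pow 4)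
  have hPint : ∫ θ, ‖θ‖ ^ 4 ∂π = ∫ z, ‖projFst dΘ dU z‖ ^ 4 ∂μ := by
    rw [← hmap, integral_map (by fun_prop) (by fun_prop)]
  set Mθ := ∫ θ, ‖θ‖ ^ 4 ∂π
  have hMθ : 0 ≤ Mθ := integral_nonneg fun _ => by positivity
  refine ⟨6 * Kgrow ^ 2 * (Mθ + 1), by positivity, fun r hr hgrow G0 hG0 hW => ?_⟩
  set W := (W14pow4 μ G0).toReal
  have hG0c := hG0.continuous
  have hG := integrable_norm_pow_four_of_W14pow4_ne_top hG0c hW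
  have hV := hG.norm_concatE_pow_four (by fun_prop) (by fun_prop) hP
  have hmoment : ∫ z, ‖concatE (G0 z) (projFst dΘ dU z)‖ ^ 4 ∂μ ≤ 2 * (W + Mθ) := by
    refine (integral_norm_concatE_pow_four_le hV hG hP).trans ?_
    rw [← hPint]
    gcongr
    exact integral_norm_pow_four_le_W14pow4 hG0c hW
  have hW0 : 0 ≤ W := ENNReal.toReal_nonneg
  calc _ ≤ 3 * Kgrow ^ 2 * (∫ z, ‖concatE (G0 z) (projFst dΘ dU z)‖ ^ 4 ∂μ + 1) :=
        variance_comp_le_of_norm_fderiv_le (hr.differentiable one_ne_zero) hgrow (by fun_prop) hV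
    _ ≤ 3 * Kgrow ^ 2 * (2 * (W + Mθ) + 1) := by gcongr
    _ ≤ 6 * Kgrow ^ 2 * (Mθ + 1) * (W + 1) := by
        nlinarith [mul_nonneg (mul_nonneg (sq_nonneg Kgrow) hMθ) hW0, sq_nonneg Kgrow]

/-- **Level-0 variance bound (Theorem 1 of the paper, NLE case, base level).** -/
theorem level0_variance_bound
    (dΘ dU dX : ℕ)
    (π : Measure (Euc dΘ)) (𝕌 : Measure (Euc dU))
    [IsProbabilityMeasure π] [IsProbabilityMeasure 𝕌]
    (hπ : IsLogConcaveMeasure π) (h𝕌 : IsLogConcaveMeasure 𝕌)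
    (Kgrow : ℝ) (hKgrow : 0 < Kgrow) :
    ∃ K₀ > (0 : ℝ),
      ∀ r : Euc (dX + dΘ) → ℝ, ContDiff ℝ 1 r →
        (∀ v : Euc (dX + dΘ), ‖fderiv ℝ r v‖ ≤ Kgrow * (‖v‖ + 1)) →
      ∀ G0 : Euc (dΘ + dU) → Euc dX, ContDiff ℝ 1 G0 →
        W14pow4 (Measure.map (fun p : Euc dΘ × Euc dU => concatE p.1 p.2) (π.prod 𝕌)) G0 ≠ ⊤ →
        variance
            (fun z : Euc (dΘ + dU) => r (concatE (G0 z) (projFst dΘ dU z)))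
            (Measure.map (fun p : Euc dΘ × Euc dU => concatE p.1 p.2) (π.prod 𝕌))
          ≤ K₀ *
            ((W14pow4 (Measure.map (fun p : Euc dΘ × Euc dU => concatE p.1 p.2) (π.prod 𝕌))
                G0).toReal + 1) :=
  level0_variance_bound_general dΘ dU dX π 𝕌 hπ Kgrow hKgrow
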